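/- Let H, Q_1, …, Q_c be Hermitian operators on ℂ^d, let μ_1, …, μ_c ∈ ℝ, set W := H + Σ_{j=1}^c μ_j Q_j, let β ≥ 0, and let γ := e^{−βW} / Tr(e^{−βW}) be the Non-Abelian Thermal State. Then γ is completely passive with respect to the payoff function W: for every m ≥ 1 and every unitary U on (ℂ^d)^{⊗m}, Tr(U γ^{⊗m} U† W̄_m) ≥ Tr(γ^{⊗m} W̄_m), where W̄_m := Σ_{ℓ=0}^{m−1} I^{⊗ℓ} ⊗ W ⊗ I^{⊗(m−1−ℓ)}. In other words, no chemical work can be extracted from any number of copies of γ by any unitary. -/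

import Mathlib

open Matrix BigOperators
open scoped ComplexOrder

/-- Functional calculus for a Hermitian matrix: apply `f` to the eigenvalues.
(Returns `0` if the matrix is not Hermitian.) -/
noncomputable def matFun {n : Type*} [Fintype n] [DecidableEq n]
    (f : ℝ → ℝ) (A : Matrix n n ℂ) : Matrix n n ℂ :=
  if hA : A.IsHermitian then
    (hA.eigenvectorUnitary : Matrix n n ℂ) *
      Matrix.diagonal (fun i => (f (hA.eigenvalues i) : ℂ)) *
      (star hA.eigenvectorUnitary : Matrix n n ℂ)
  else 0

/-- Spectral projector of a Hermitian matrix onto the direct sum of the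
eigenspaces with eigenvalue in the closed interval `[a, b]`. -/
noncomputable def specProj {n : Type*} [Fintype n] [DecidableEq n]
    (A : Matrix n n ℂ) (a b : ℝ) : Matrix n n ℂ :=
  matFun (Set.indicator (Set.Icc a b) fun _ => (1 : ℝ)) A

/-- Largest eigenvalue of a Hermitian matrix. -/
noncomputable def eigMax {n : Type*} [Fintype n] [DecidableEq n]
    (A : Matrix n n ℂ) : ℝ :=
  if hA : A.IsHermitian then ⨆ i, hA.eigenvalues i else 0

/-- Smallest eigenvalue of a Hermitian matrix. -/
noncomputable def eigMin {n : Type*} [Fintype n] [DecidableEq n]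
    (A : Matrix n n ℂ) : ℝ :=
  if hA : A.IsHermitian then ⨅ i, hA.eigenvalues i else 0

/-- Spectral diameter `Σ(A) = λ_max(A) - λ_min(A)` of a Hermitian matrix. -/
noncomputable def specDiam {n : Type*} [Fintype n] [DecidableEq n]
    (A : Matrix n n ℂ) : ℝ :=
  eigMax A - eigMin A

/-- Operator norm `‖A‖_∞` of a Hermitian matrix: the largest absolute value
of an eigenvalue. -/
noncomputable def opNorm {n : Type*} [Fintype n] [DecidableEq n]
    (A : Matrix n n ℂ) : ℝ :=
  if hA : A.IsHermitian then ⨆ i, |hA.eigenvalues i| else 0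

/-- The single-site operator `I^{⊗ℓ} ⊗ Q ⊗ I^{⊗(N-1-ℓ)}` on `(ℂ^d)^{⊗N}`. -/
noncomputable def siteOp {d : ℕ} (Q : Matrix (Fin d) (Fin d) ℂ) (N : ℕ) (ℓ : Fin N) :
    Matrix (Fin N → Fin d) (Fin N → Fin d) ℂ :=
  Matrix.of fun x y =>
    (∏ k ∈ Finset.univ.erase ℓ, if x k = y k then (1 : ℂ) else 0) * Q (x ℓ) (y ℓ)

/-- The average operator `Q̄ := (1/N) Σ_ℓ I^{⊗ℓ} ⊗ Q ⊗ I^{⊗(N-1-ℓ)}` on `(ℂ^d)^{⊗N}`. -/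
noncomputable def avgOp {d : ℕ} (Q : Matrix (Fin d) (Fin d) ℂ) (N : ℕ) :
    Matrix (Fin N → Fin d) (Fin N → Fin d) ℂ :=
  (N : ℂ)⁻¹ • ∑ ℓ : Fin N, siteOp Q N ℓ

/-- The `N`-fold tensor power `ρ^{⊗N}` on `(ℂ^d)^{⊗N}`. -/
noncomputable def tensorPow {d : ℕ} (ρ : Matrix (Fin d) (Fin d) ℂ) (N : ℕ) :
    Matrix (Fin N → Fin d) (Fin N → Fin d) ℂ :=
  Matrix.of fun x y => ∏ ℓ, ρ (x ℓ) (y ℓ)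

/-- The reduced state on the `ℓ`-th tensor factor: partial trace over all
tensor factors except the `ℓ`-th. -/
noncomputable def reduceAt {d N : ℕ}
    (Ω : Matrix (Fin N → Fin d) (Fin N → Fin d) ℂ) (ℓ : Fin N) :
    Matrix (Fin d) (Fin d) ℂ :=
  Matrix.of fun a b =>
    ∑ x ∈ Finset.univ.filter (fun x : Fin N → Fin d => x ℓ = a),
      Ω x (Function.update x ℓ b)

/-- Quantum relative entropy `D(ρ‖σ) = Tr(ρ (log ρ - log σ))`, with the
convention `log 0 = 0` (so `0 log 0 = 0` on the kernel of `ρ`). -/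
noncomputable def relEnt {n : Type*} [Fintype n] [DecidableEq n]
    (ρ σ : Matrix n n ℂ) : ℝ :=
  (Matrix.trace (ρ * (matFun Real.log ρ - matFun Real.log σ))).re

/-- Trace norm `‖A‖₁ = Tr √(AᴴA)`. -/
noncomputable def traceNorm {n : Type*} [Fintype n] [DecidableEq n]
    (A : Matrix n n ℂ) : ℝ :=
  (Matrix.trace
    ((Matrix.posSemidef_conjTranspose_mul_self A).1.eigenvectorUnitary.1 *
      Matrix.diagonal (((↑) : ℝ → ℂ) ∘ (Real.sqrt ·) ∘
        (Matrix.posSemidef_conjTranspose_mul_self A).1.eigenvalues) *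
      (star (Matrix.posSemidef_conjTranspose_mul_self A).1.eigenvectorUnitary :
        Matrix n n ℂ))).re

/-- Matrix exponential, defined by the power series. -/
noncomputable def matExp {n : Type*} [Fintype n] [DecidableEq n]
    (A : Matrix n n ℂ) : Matrix n n ℂ :=
  ∑' k : ℕ, ((k.factorial : ℂ)⁻¹) • A ^ k

/-!
Diagonalise `W = V diag(w) V†`. Then `γ^{⊗m}` and `W̄_m` are simultaneously diagonal in the
product basis given by `V^{⊗m}`, with eigenvalues `P x ∝ exp(-β a x)` and `a x = Σ_ℓ w (x ℓ)`.
For a unitary `U`, the numbers `D y x = |B y x|²`, where `B = (V^{⊗m})† U V^{⊗m}`, form a doubly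
stochastic matrix, and `Tr(U γ^{⊗m} U† W̄_m) = Σ_{y,x} D y x P x a y`. Passivity then reduces to
`Σ_{y,x} D y x e^{-β a x} (a y - a x) ≥ 0`: after multiplying by `β`, each term dominates
`D y x (e^{-β a x} - e^{-β a y})` because `1 - e^{-t} ≤ t`, and these terms sum to zero since the
rows and columns of `D` sum to one.
-/

namespace Matrix

variable {ι n R : Type*} [Fintype ι]

def piKronecker [CommMonoid R] (A : ι → Matrix n n R) : Matrix (ι → n) (ι → n) R :=
  of fun x y => ∏ k, A k (x k) (y k)

theorem piKronecker_mul [CommSemiring R] [DecidableEq ι] [Fintype n]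
    (A B : ι → Matrix n n R) :
    piKronecker (A * B) = piKronecker A * piKronecker B := by
  ext x y
  simp only [piKronecker, mul_apply, of_apply, Pi.mul_apply, Finset.prod_univ_sum,
    Fintype.piFinset_univ, Finset.prod_mul_distrib]

theorem piKronecker_diagonal [CommMonoidWithZero R] [DecidableEq n] (c : ι → n → R) :
    piKronecker (fun k => diagonal (c k)) = diagonal fun x => ∏ k, c k (x k) := by
  ext x y
  by_cases h : x = y
  · simp [piKronecker, h]
  · obtain ⟨k, hk⟩ := Function.ne_iff.mp h
    simp [piKronecker, h, Finset.prod_eq_zero (Finset.mem_univ k), hk]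

theorem piKronecker_one [CommMonoidWithZero R] [DecidableEq n] :
    piKronecker (fun _ : ι => (1 : Matrix n n R)) = 1 := by
  simpa using piKronecker_diagonal (ι := ι) fun _ _ => (1 : R)

theorem piKronecker_conjTranspose [CommSemiring R] [StarRing R] (A : ι → Matrix n n R) :
    (piKronecker A)ᴴ = piKronecker fun k => (A k)ᴴ := by
  ext x y
  simp [piKronecker, star_prod]

theorem piKronecker_conj_diagonal [CommSemiring R] [StarRing R] [DecidableEq ι] [Fintype n]
    [DecidableEq n] (V : Matrix n n R) (c : ι → n → R) :
    piKronecker (fun k => V * diagonal (c k) * Vᴴ) =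
      piKronecker (fun _ => V) * diagonal (fun x => ∏ k, c k (x k)) *
        (piKronecker fun _ => V)ᴴ := by
  rw [piKronecker_conjTranspose, ← piKronecker_diagonal, ← piKronecker_mul, ← piKronecker_mul]
  rfl

section Unitary

variable {n α : Type*} [Fintype n] [DecidableEq n] [CommRing α] [StarRing α]

theorem mul_conjTranspose_of_mem_unitaryGroup {V : Matrix n n α} (hV : V ∈ unitaryGroup n α) :
    V * Vᴴ = 1 :=
  mem_unitaryGroup_iff.mp hV

theorem conjTranspose_mul_of_mem_unitaryGroup {V : Matrix n n α} (hV : V ∈ unitaryGroup n α) :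
    Vᴴ * V = 1 :=
  mem_unitaryGroup_iff'.mp hV

theorem trace_conj_of_mem_unitaryGroup {V : Matrix n n α} (hV : V ∈ unitaryGroup n α)
    (X : Matrix n n α) : trace (V * X * Vᴴ) = trace X := by
  rw [trace_mul_cycle, conjTranspose_mul_of_mem_unitaryGroup hV, Matrix.one_mul]

end Unitary

end Matrix

open Matrix

section TensorPower

variable {d : ℕ}

theorem tensorPow_eq_piKronecker (ρ : Matrix (Fin d) (Fin d) ℂ) (N : ℕ) :
    tensorPow ρ N = piKronecker fun _ => ρ := rfl

theorem tensorPow_mem_unitaryGroup {V : Matrix (Fin d) (Fin d) ℂ} (hV : V ∈ unitaryGroup (Fin d) ℂ)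
    (N : ℕ) : tensorPow V N ∈ unitaryGroup (Fin N → Fin d) ℂ := by
  rw [mem_unitaryGroup_iff, star_eq_conjTranspose, tensorPow_eq_piKronecker,
    piKronecker_conjTranspose, ← piKronecker_mul, ← piKronecker_one]
  exact congrArg piKronecker (funext fun _ => mul_conjTranspose_of_mem_unitaryGroup hV)

theorem siteOp_eq_piKronecker (Q : Matrix (Fin d) (Fin d) ℂ) (N : ℕ) (ℓ : Fin N) :
    siteOp Q N ℓ = piKronecker fun k => if k = ℓ then Q else 1 := by
  ext x y
  simp only [siteOp, piKronecker, of_apply, ← Finset.mul_prod_erase _ _ (Finset.mem_univ ℓ)]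
  rw [mul_comm]
  congr 1
  refine Finset.prod_congr rfl fun k hk => ?_
  simp [Finset.ne_of_mem_erase hk, one_apply]

theorem tensorPow_conj_diagonal (V : Matrix (Fin d) (Fin d) ℂ) (c : Fin d → ℂ) (N : ℕ) :
    tensorPow (V * diagonal c * Vᴴ) N =
      tensorPow V N * diagonal (fun x => ∏ ℓ, c (x ℓ)) * (tensorPow V N)ᴴ :=
  piKronecker_conj_diagonal V fun _ => c

theorem siteOp_conj_diagonal {V : Matrix (Fin d) (Fin d) ℂ} (hV : V * Vᴴ = 1) (c : Fin d → ℂ)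
    (N : ℕ) (ℓ : Fin N) :
    siteOp (V * diagonal c * Vᴴ) N ℓ =
      tensorPow V N * diagonal (fun x => c (x ℓ)) * (tensorPow V N)ᴴ := by
  have hfactor : (fun k => if k = ℓ then V * diagonal c * Vᴴ else 1) =
      fun k => V * diagonal (if k = ℓ then c else 1) * Vᴴ := by
    ext1 k
    split_ifs
    · rfl
    · rw [Pi.one_def, diagonal_one, Matrix.mul_one, hV]
  have hprod : (fun x : Fin N → Fin d => ∏ k, (if k = ℓ then c else 1) (x k)) =
      fun x => c (x ℓ) := by
    funext x
    rw [Finset.prod_eq_single ℓ (fun k _ hk => by simp [hk]) (by simp), if_pos rfl]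
  rw [siteOp_eq_piKronecker, hfactor, piKronecker_conj_diagonal, hprod]
  rfl

theorem sum_siteOp_conj_diagonal {V : Matrix (Fin d) (Fin d) ℂ} (hV : V * Vᴴ = 1)
    (c : Fin d → ℂ) (N : ℕ) :
    ∑ ℓ, siteOp (V * diagonal c * Vᴴ) N ℓ =
      tensorPow V N * diagonal (fun x => ∑ ℓ, c (x ℓ)) * (tensorPow V N)ᴴ := by
  have hsum : ∑ ℓ : Fin N, diagonal (fun x : Fin N → Fin d => c (x ℓ)) =
      diagonal fun x => ∑ ℓ, c (x ℓ) := by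
    simpa [Finset.sum_fn] using
      (map_sum (diagonalAddMonoidHom (Fin N → Fin d) ℂ) (fun ℓ x => c (x ℓ)) _).symm
  simp only [siteOp_conj_diagonal hV, ← Finset.sum_mul, ← Finset.mul_sum, hsum]

end TensorPower

section Spectral

variable {n : Type*} [Fintype n] [DecidableEq n]

theorem Matrix.IsHermitian.exists_unitary_conj_diagonal {A : Matrix n n ℂ} (hA : A.IsHermitian) :
    ∃ V ∈ unitaryGroup n ℂ, ∃ w : n → ℝ, A = V * diagonal (fun i => (w i : ℂ)) * Vᴴ :=
  ⟨hA.eigenvectorUnitary, hA.eigenvectorUnitary.2, hA.eigenvalues, hA.spectral_theorem⟩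

theorem matExp_conj_diagonal {V : Matrix n n ℂ} (hV : V ∈ unitaryGroup n ℂ) (c : n → ℂ) :
    matExp (V * diagonal c * Vᴴ) = V * diagonal (fun i => Complex.exp (c i)) * Vᴴ := by
  have hV' : V * Vᴴ = 1 := mul_conjTranspose_of_mem_unitaryGroup hV
  have hunit : IsUnit V := ⟨⟨V, Vᴴ, hV', conjTranspose_mul_of_mem_unitaryGroup hV⟩, rfl⟩
  have hexp : matExp (V * diagonal c * Vᴴ) = NormedSpace.exp (V * diagonal c * Vᴴ) := by
    rw [NormedSpace.exp_eq_tsum ℂ]; rfl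
  rw [hexp, ← inv_eq_right_inv hV', exp_conj _ _ hunit, exp_diagonal, Pi.exp_def]
  simp_rw [Complex.exp_eq_exp_ℂ]

theorem gibbs_conj_diagonal {V : Matrix n n ℂ} (hV : V ∈ unitaryGroup n ℂ) (w : n → ℝ) (β : ℝ) :
    (trace (matExp (-(β : ℂ) • (V * diagonal (fun i => (w i : ℂ)) * Vᴴ))))⁻¹ •
        matExp (-(β : ℂ) • (V * diagonal (fun i => (w i : ℂ)) * Vᴴ)) =
      V * diagonal (fun i => (((∑ j, Real.exp (-β * w j))⁻¹ * Real.exp (-β * w i) : ℝ) : ℂ)) *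
        Vᴴ := by
  have hscale : -(β : ℂ) • (V * diagonal (fun i => (w i : ℂ)) * Vᴴ) =
      V * diagonal (fun i => ((-β * w i : ℝ) : ℂ)) * Vᴴ := by
    rw [← Matrix.smul_mul, ← Matrix.mul_smul, ← diagonal_smul]
    congr 3
    ext i
    simp
  rw [hscale, matExp_conj_diagonal hV, trace_conj_of_mem_unitaryGroup hV, trace_diagonal,
    ← Matrix.smul_mul, ← Matrix.mul_smul, ← diagonal_smul]
  congr 3
  ext i
  push_cast
  rfl

end Spectral

section Passivity

variable {n : Type*} [Fintype n] [DecidableEq n]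

theorem re_trace_conj_diagonal_mul_diagonal (B : Matrix n n ℂ) (f g : n → ℝ) :
    (trace (B * diagonal (fun x => (f x : ℂ)) * Bᴴ * diagonal (fun y => (g y : ℂ)))).re =
      ∑ y, ∑ x, Complex.normSq (B y x) * f x * g y := by
  have hentry : ∀ y, (B * diagonal (fun x => (f x : ℂ)) * Bᴴ) y y =
      ((∑ x, Complex.normSq (B y x) * f x : ℝ) : ℂ) := by
    intro y
    rw [mul_apply]
    push_cast
    refine Finset.sum_congr rfl fun x _ => ?_
    rw [mul_diagonal, conjTranspose_apply, Complex.star_def, ← Complex.mul_conj]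
    ring
  simp only [trace, diag_apply, mul_diagonal, hentry, Complex.re_sum, ← Complex.ofReal_mul,
    Complex.ofReal_re, Finset.sum_mul]

theorem sum_normSq_row_of_mem_unitaryGroup {B : Matrix n n ℂ} (hB : B ∈ unitaryGroup n ℂ)
    (i : n) : ∑ j, Complex.normSq (B i j) = 1 := by
  have h := congrFun (congrFun (mul_conjTranspose_of_mem_unitaryGroup hB) i) i
  simp only [mul_apply, conjTranspose_apply, one_apply_eq, Complex.star_def,
    Complex.mul_conj] at h
  exact_mod_cast h

theorem normSq_mem_doublyStochastic {B : Matrix n n ℂ} (hB : B ∈ unitaryGroup n ℂ) :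
    (of fun y x => Complex.normSq (B y x)) ∈ doublyStochastic ℝ n := by
  refine mem_doublyStochastic_iff_sum.mpr
    ⟨fun _ _ => Complex.normSq_nonneg _, sum_normSq_row_of_mem_unitaryGroup hB, fun x => ?_⟩
  simpa using sum_normSq_row_of_mem_unitaryGroup (Unitary.star_mem hB) x

theorem sum_sum_mul_sub_eq_zero_of_mem_doublyStochastic {D : Matrix n n ℝ}
    (hD : D ∈ doublyStochastic ℝ n) (f : n → ℝ) : ∑ y, ∑ x, D y x * (f x - f y) = 0 := by
  simp only [mul_sub, Finset.sum_sub_distrib, ← Finset.sum_mul]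
  rw [Finset.sum_comm]
  simp [← Finset.sum_mul, sum_col_of_mem_doublyStochastic hD, sum_row_of_mem_doublyStochastic hD]

theorem exp_sub_exp_le_exp_mul (β s t : ℝ) :
    Real.exp (-β * s) - Real.exp (-β * t) ≤ Real.exp (-β * s) * (β * (t - s)) := by
  have hsplit : Real.exp (-β * t) = Real.exp (-β * s) * Real.exp (-(β * (t - s))) := by
    rw [← Real.exp_add]; ring_nf
  nlinarith [Real.add_one_le_exp (-(β * (t - s))), Real.exp_pos (-β * s)]

theorem sum_exp_mul_le_of_mem_doublyStochastic {D : Matrix n n ℝ}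
    (hD : D ∈ doublyStochastic ℝ n) (a : n → ℝ) {β : ℝ} (hβ : 0 ≤ β) :
    ∑ x, Real.exp (-β * a x) * a x ≤ ∑ y, ∑ x, D y x * Real.exp (-β * a x) * a y := by
  have hcol : ∑ y, ∑ x, D y x * Real.exp (-β * a x) * a x = ∑ x, Real.exp (-β * a x) * a x := by
    rw [Finset.sum_comm]
    simp only [mul_assoc, ← Finset.sum_mul, sum_col_of_mem_doublyStochastic hD, one_mul]
  suffices 0 ≤ ∑ y, ∑ x, D y x * (Real.exp (-β * a x) * (a y - a x)) by
    simp only [mul_sub, Finset.sum_sub_distrib, ← mul_assoc, hcol] at this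
    linarith
  rcases hβ.eq_or_lt with rfl | hβ
  · simpa [neg_add_eq_sub] using (sum_sum_mul_sub_eq_zero_of_mem_doublyStochastic hD (-a)).ge
  · refine nonneg_of_mul_nonneg_right ?_ hβ
    calc (0 : ℝ) = ∑ y, ∑ x, D y x * (Real.exp (-β * a x) - Real.exp (-β * a y)) :=
          (sum_sum_mul_sub_eq_zero_of_mem_doublyStochastic hD _).symm
      _ ≤ ∑ y, ∑ x, D y x * (Real.exp (-β * a x) * (β * (a y - a x))) :=
          Finset.sum_le_sum fun y _ => Finset.sum_le_sum fun x _ =>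
            mul_le_mul_of_nonneg_left (exp_sub_exp_le_exp_mul β (a x) (a y))
              (nonneg_of_mem_doublyStochastic hD)
      _ = β * ∑ y, ∑ x, D y x * (Real.exp (-β * a x) * (a y - a x)) := by
          simp only [Finset.mul_sum]
          refine Finset.sum_congr rfl fun y _ => Finset.sum_congr rfl fun x _ => ?_
          ring

theorem re_trace_gibbs_mul_le_re_trace_conj {V U : Matrix n n ℂ} (hV : V ∈ unitaryGroup n ℂ)
    (hU : U ∈ unitaryGroup n ℂ) {P a : n → ℝ} {β s : ℝ} (hβ : 0 ≤ β) (hs : 0 ≤ s)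
    (hP : ∀ x, P x = s * Real.exp (-β * a x)) :
    (trace (V * diagonal (fun x => (P x : ℂ)) * Vᴴ * (V * diagonal (fun x => (a x : ℂ)) * Vᴴ))).re ≤
      (trace (U * (V * diagonal (fun x => (P x : ℂ)) * Vᴴ) * Uᴴ *
        (V * diagonal (fun x => (a x : ℂ)) * Vᴴ))).re := by
  set B := Vᴴ * U * V
  have hB : B ∈ unitaryGroup n ℂ := mul_mem (mul_mem (Unitary.star_mem hV) hU) hV
  have hcancel : ∀ X, V * (Vᴴ * X) = X := fun X => by
    rw [← Matrix.mul_assoc, mul_conjTranspose_of_mem_unitaryGroup hV, Matrix.one_mul]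
  have hcancel' : ∀ X, Vᴴ * (V * X) = X := fun X => by
    rw [← Matrix.mul_assoc, conjTranspose_mul_of_mem_unitaryGroup hV, Matrix.one_mul]
  have hleft : V * diagonal (fun x => (P x : ℂ)) * Vᴴ * (V * diagonal (fun x => (a x : ℂ)) * Vᴴ) =
      V * diagonal (fun x => ((P x * a x : ℝ) : ℂ)) * Vᴴ := by
    simp only [Matrix.mul_assoc, hcancel']
    rw [← Matrix.mul_assoc (diagonal _), diagonal_mul_diagonal]
    push_cast
    rfl
  have hright : U * (V * diagonal (fun x => (P x : ℂ)) * Vᴴ) * Uᴴ *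
        (V * diagonal (fun x => (a x : ℂ)) * Vᴴ) =
      V * (B * diagonal (fun x => (P x : ℂ)) * Bᴴ * diagonal (fun x => (a x : ℂ))) * Vᴴ := by
    simp only [B, conjTranspose_mul, conjTranspose_conjTranspose, Matrix.mul_assoc, hcancel]
  rw [hleft, hright, trace_conj_of_mem_unitaryGroup hV, trace_conj_of_mem_unitaryGroup hV,
    trace_diagonal, re_trace_conj_diagonal_mul_diagonal, ← Complex.ofReal_sum, Complex.ofReal_re]
  calc ∑ x, P x * a x = s * ∑ x, Real.exp (-β * a x) * a x := by
        simp only [hP, Finset.mul_sum, mul_assoc]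
    _ ≤ s * ∑ y, ∑ x, Complex.normSq (B y x) * Real.exp (-β * a x) * a y :=
        mul_le_mul_of_nonneg_left
          (sum_exp_mul_le_of_mem_doublyStochastic (normSq_mem_doublyStochastic hB) a hβ) hs
    _ = ∑ y, ∑ x, Complex.normSq (B y x) * P x * a y := by
        simp only [hP, Finset.mul_sum]
        refine Finset.sum_congr rfl fun y _ => Finset.sum_congr rfl fun x _ => ?_
        ring

end Passivity

/-- The Non-Abelian Thermal State is completely passive with
respect to the payoff function `W = H + Σ_j μ_j Q_j`: no unitary on any number
of copies can lower the expectation value of `W̄_m`. -/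
theorem NATS_completely_passive
    {d : ℕ} (c : ℕ)
    (H : Matrix (Fin d) (Fin d) ℂ) (hH : H.IsHermitian)
    (Q : Fin c → Matrix (Fin d) (Fin d) ℂ) (hQ : ∀ j, (Q j).IsHermitian)
    (μ : Fin c → ℝ) (β : ℝ) (hβ : 0 ≤ β)
    (W : Matrix (Fin d) (Fin d) ℂ)
    (hW : W = H + ∑ j, (μ j : ℂ) • Q j)
    (γ : Matrix (Fin d) (Fin d) ℂ)
    (hγ : γ = (Matrix.trace (matExp (-(β : ℂ) • W)))⁻¹ • matExp (-(β : ℂ) • W)) :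
    ∀ m : ℕ, 1 ≤ m →
      ∀ U : Matrix (Fin m → Fin d) (Fin m → Fin d) ℂ,
        U ∈ Matrix.unitaryGroup (Fin m → Fin d) ℂ →
        (Matrix.trace (tensorPow γ m * ∑ ℓ : Fin m, siteOp W m ℓ)).re ≤
          (Matrix.trace (U * tensorPow γ m * Uᴴ * ∑ ℓ : Fin m, siteOp W m ℓ)).re := by
  intro m _ U hU
  have hWh : W.IsHermitian :=
    hW ▸ hH.add (isSelfAdjoint_sum _ fun j _ => (hQ j).smul (Complex.conj_ofReal (μ j)))
  obtain ⟨V, hV, w, rfl⟩ := hWh.exists_unitary_conj_diagonal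
  rw [gibbs_conj_diagonal hV] at hγ
  subst hγ
  rw [tensorPow_conj_diagonal, sum_siteOp_conj_diagonal (mul_conjTranspose_of_mem_unitaryGroup hV)]
  simp_rw [← Complex.ofReal_prod, ← Complex.ofReal_sum]
  refine re_trace_gibbs_mul_le_re_trace_conj (tensorPow_mem_unitaryGroup hV m) hU hβ
    (s := ((∑ j, Real.exp (-β * w j)) ^ m)⁻¹) (by positivity) fun x => ?_
  rw [Finset.prod_mul_distrib, Finset.prod_const, Finset.card_univ, Fintype.card_fin, inv_pow,
    ← Real.exp_sum, Finset.mul_sum]
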